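/- arXiv:1906.05635 — 4 statements merged into one kernel-verified Lean document; each statement's English description precedes it below -/
import Mathlib

section
/- Let A be a real d×d matrix with all eigenvalues of strictly negative real part and B₁,…,B_d > 0. If H : ℝ^d → ℝ is a C¹ function with H(0) = 1 satisfying −∑_ℓ B_ℓ p_ℓ² H(p) + ∑_ℓ p_ℓ ∑_j A_{ℓ,j} ∂_{p_j} H(p) = 0 for all p ∈ ℝ^d, then H(p) = exp(−⟨p, S p⟩) where S = ∫₀^∞ e^{τA} diag(B) e^{τAᵀ} dτ. In particular the solution is unique. -/
open MeasureTheory Matrix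

/-!
Along the characteristic `q s = p ᵥ* exp (s • A)`, which solves `q' = q ᵥ* A`, the equation reads
`(H ∘ q)' = c * (H ∘ q)` with `c s = ∑ ℓ, b ℓ * q s ℓ ^ 2 = p ⬝ᵥ K s *ᵥ p`, where
`K s = exp (s • A) * diagonal b * (exp (s • A))ᵀ`; so `H (q s) * exp (-∫₀ˢ c)` is constant.
On a generalized eigenspace for `μ`, `exp (t • A)` acts as `exp (t μ)` times a polynomial in `t`,
so the spectral condition makes `exp (t • A)` decay exponentially. Letting `s → ∞` gives
`H p = H 0 * exp (-∫₀^∞ c) = exp (-(p ⬝ᵥ S *ᵥ p))`.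
-/

open NormedSpace Filter Asymptotics Topology Finset Set
open scoped Nat

theorem IsCompact.exists_pos_forall_re_lt_neg {s : Set ℂ} (hs : IsCompact s)
    (h : ∀ z ∈ s, z.re < 0) : ∃ ε > 0, ∀ z ∈ s, z.re < -ε := by
  rcases s.eq_empty_or_nonempty with rfl | hne
  · exact ⟨1, one_pos, by simp⟩
  obtain ⟨z₀, hz₀, hmax⟩ := hs.exists_isMaxOn hne Complex.continuous_re.continuousOn
  have := h z₀ hz₀
  exact ⟨-z₀.re / 2, by linarith, fun z hz => by linarith [show z.re ≤ z₀.re from hmax hz]⟩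

theorem isBigO_cexp_mul_mul_pow {μ : ℂ} {ε : ℝ} (hμ : μ.re < -ε) (k : ℕ) :
    (fun t : ℝ => Complex.exp (t * μ) * (t : ℂ) ^ k) =O[atTop] fun t => Real.exp (-ε * t) := by
  have hδ : 0 < -ε - μ.re := by linarith
  refine IsBigO.of_norm_left <| ((isBigO_refl (fun t : ℝ => Real.exp (μ.re * t)) atTop).mul
    (isLittleO_pow_exp_pos_mul_atTop k hδ).isBigO).norm_left.congr (fun t => ?_) (fun t => ?_)
  · simp only [norm_mul, norm_pow, Complex.norm_exp, Complex.re_ofReal_mul, Complex.norm_real,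
      Real.norm_of_nonneg (Real.exp_pos _).le, mul_comm t]
  · rw [← Real.exp_add]; ring_nf

theorem integrableOn_Ioi_mul_of_isBigO_exp_neg {f g : ℝ → ℝ} {a ε : ℝ} (hε : 0 < ε)
    (hf : ContinuousOn f (Ici a)) (hg : ContinuousOn g (Ici a))
    (hfo : f =O[atTop] fun t => Real.exp (-ε * t)) (hgo : g =O[atTop] fun t => Real.exp (-ε * t)) :
    IntegrableOn (fun t => f t * g t) (Ioi a) :=
  integrable_of_isBigO_exp_neg (b := 2 * ε) (by positivity) (hf.mul hg)
    ((hfo.mul hgo).congr (fun _ => rfl) fun t => by rw [← Real.exp_add]; ring_nf)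

theorem eq_exp_neg_integral_Ioi_of_hasDerivAt {G c : ℝ → ℝ} (hc : Continuous c)
    (hcint : IntegrableOn c (Ioi 0)) (hG : ∀ s, HasDerivAt G (c s * G s) s)
    (hlim : Tendsto G atTop (𝓝 1)) :
    G 0 = Real.exp (-∫ τ in Ioi 0, c τ) := by
  set F := fun s => G s * Real.exp (-∫ τ in (0 : ℝ)..s, c τ)
  have hF : ∀ s, HasDerivAt F 0 s := fun s =>
    ((hG s).mul (hc.integral_hasStrictDerivAt 0 s).hasDerivAt.neg.exp).congr_deriv
      (by simp only [Pi.neg_apply]; ring)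
  have hFconst : ∀ s, F s = G 0 := fun s => by
    simpa [F] using is_const_of_deriv_eq_zero (fun x => (hF x).differentiableAt)
      (fun x => (hF x).deriv) s 0
  have hFlim : Tendsto F atTop (𝓝 (1 * Real.exp (-∫ τ in Ioi 0, c τ))) :=
    hlim.mul ((Real.continuous_exp.tendsto _).comp
      (intervalIntegral_tendsto_integral_Ioi 0 hcint tendsto_id).neg)
  rw [one_mul] at hFlim
  exact tendsto_nhds_unique (tendsto_const_nhds.congr fun s => (hFconst s).symm) hFlim

theorem map_vecMul_eq_sum {n R F : Type*} [Fintype n] [DecidableEq n]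
    [CommSemiring R] [FunLike F (n → R) R] [LinearMapClass F R (n → R) R] (L : F)
    (x : n → R) (A : Matrix n n R) :
    L (x ᵥ* A) = ∑ ℓ, x ℓ * ∑ j, A ℓ j * L (Pi.single j 1) := by
  conv_lhs => rw [pi_eq_sum_univ' (x ᵥ* A)]
  simp only [map_sum, map_smul, smul_eq_mul, vecMul, dotProduct, Finset.sum_mul, Finset.mul_sum]
  rw [Finset.sum_comm]
  exact sum_congr rfl fun _ _ => sum_congr rfl fun _ _ => by ring

namespace Matrix

theorem dotProduct_mul_diagonal_mul_transpose_mulVec {m n R : Type*} [Fintype m] [Fintype n]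
    [DecidableEq n] [CommRing R] (E : Matrix m n R) (b : n → R) (p : m → R) :
    p ⬝ᵥ (E * diagonal b * Eᵀ) *ᵥ p = ∑ ℓ, b ℓ * (p ᵥ* E) ℓ ^ 2 := by
  rw [← mulVec_mulVec, ← mulVec_mulVec, dotProduct_mulVec, mulVec_transpose]
  exact sum_congr rfl fun ℓ _ => by rw [mulVec_diagonal]; ring

theorem mul_diagonal_mul_transpose_apply {m n R : Type*} [Fintype n] [DecidableEq n]
    [CommRing R] (E : Matrix m n R) (b : n → R) (i j : m) :
    (E * diagonal b * Eᵀ) i j = ∑ ℓ, b ℓ * (E i ℓ * E j ℓ) := by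
  rw [mul_apply]
  simp only [mul_diagonal, transpose_apply]
  exact sum_congr rfl fun ℓ _ => by ring

theorem integrableOn_mul_diagonal_mul_transpose_apply {m n : Type*} [Fintype n] [DecidableEq n]
    {E : ℝ → Matrix m n ℝ} {a ε : ℝ} (hε : 0 < ε) (hE : Continuous E)
    (hdecay : ∀ i j, (fun t => E t i j) =O[atTop] fun t => Real.exp (-ε * t))
    (b : n → ℝ) (i j : m) :
    IntegrableOn (fun t => (E t * diagonal b * (E t)ᵀ) i j) (Ioi a) := by
  simp only [mul_diagonal_mul_transpose_apply]
  have hcont : ∀ i ℓ, ContinuousOn (fun t => E t i ℓ) (Ici a) := fun i ℓ =>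
    ((continuous_apply ℓ).comp ((continuous_apply i).comp hE)).continuousOn
  exact integrable_finsetSum _ fun ℓ _ => (integrableOn_Ioi_mul_of_isBigO_exp_neg hε
    (hcont i ℓ) (hcont j ℓ) (hdecay i ℓ) (hdecay j ℓ)).const_mul (b ℓ)

theorem integrable_dotProduct_mulVec {m n α : Type*} [Fintype m] [Fintype n] [MeasurableSpace α]
    {μ : Measure α} {K : α → Matrix m n ℝ} (hK : ∀ i j, Integrable (fun a => K a i j) μ)
    (x : m → ℝ) (y : n → ℝ) :
    Integrable (fun a => x ⬝ᵥ K a *ᵥ y) μ := by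
  simp only [dotProduct, mulVec, Finset.mul_sum]
  exact integrable_finsetSum _ fun i _ => integrable_finsetSum _ fun j _ =>
    ((hK i j).mul_const (y j)).const_mul (x i)

theorem integral_dotProduct_mulVec {m n α : Type*} [Fintype m] [Fintype n] [MeasurableSpace α]
    {μ : Measure α} {K : α → Matrix m n ℝ} (hK : ∀ i j, Integrable (fun a => K a i j) μ)
    (x : m → ℝ) (y : n → ℝ) :
    ∫ a, x ⬝ᵥ K a *ᵥ y ∂μ = x ⬝ᵥ (of fun i j => ∫ a, K a i j ∂μ) *ᵥ y := by
  simp only [dotProduct, mulVec, Finset.mul_sum, of_apply]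
  rw [integral_finsetSum _ fun i _ => integrable_finsetSum _ fun j _ =>
    ((hK i j).mul_const (y j)).const_mul (x i)]
  refine sum_congr rfl fun i _ => ?_
  rw [integral_finsetSum _ fun j _ => ((hK i j).mul_const (y j)).const_mul (x i)]
  exact sum_congr rfl fun j _ => by rw [integral_const_mul, integral_mul_const]

variable {n : Type*} [Fintype n] [DecidableEq n]

theorem exp_smul_eq_cexp_smul_exp_smul_sub (M : Matrix n n ℂ) (μ : ℂ) (t : ℝ) :
    exp (t • M) = Complex.exp (t * μ) • exp (t • (M - μ • 1)) := by
  have hsplit : t • M = diagonal (fun _ => (t * μ : ℂ)) + t • (M - μ • 1) := by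
    rw [← smul_one_eq_diagonal, smul_sub, ← smul_assoc, Complex.real_smul]
    abel
  have hcomm : Commute (diagonal fun _ => (t * μ : ℂ)) (t • (M - μ • 1)) := by
    rw [← smul_one_eq_diagonal]
    exact (Commute.one_left _).smul_left _
  rw [hsplit, Matrix.exp_add_of_commute _ _ hcomm, exp_diagonal, Pi.exp_def,
    ← Complex.exp_eq_exp_ℂ, ← smul_one_eq_diagonal, smul_one_mul]

section LinftyOpNorm

-- Matrices carry no canonical norm; one is chosen only inside these proofs.
attribute [local instance] Matrix.linftyOpNormedRing Matrix.linftyOpNormedAlgebra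

theorem exp_mulVec_eq_sum_of_pow_mulVec_eq_zero {𝕂 : Type*} [RCLike 𝕂] {N : Matrix n n 𝕂}
    {v : n → 𝕂} {K : ℕ} (hK : N ^ K *ᵥ v = 0) :
    exp N *ᵥ v = ∑ k ∈ range K, (k !⁻¹ : 𝕂) • (N ^ k *ᵥ v) := by
  have hsum : HasSum (fun k => (k !⁻¹ : 𝕂) • (N ^ k *ᵥ v)) (exp N *ᵥ v) := by
    convert (exp_series_hasSum_exp' (𝕂 := 𝕂) N).map (mulVec.addMonoidHomLeft v)
      (continuous_id.matrix_mulVec continuous_const) using 1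
    · funext k
      exact (smul_mulVec _ _ _).symm
    · rfl
  refine hsum.unique (hasSum_sum_of_ne_finset_zero fun k hk => ?_)
  rw [← Nat.sub_add_cancel (not_lt.1 (mem_range.not.1 hk)), pow_add, ← mulVec_mulVec, hK,
    mulVec_zero, smul_zero]

theorem exp_map_algebraMap (A : Matrix n n ℝ) :
    exp (A.map (algebraMap ℝ ℂ)) = (exp A).map (algebraMap ℝ ℂ) :=
  (map_exp (algebraMap ℝ ℂ).mapMatrix
    (continuous_id.matrix_map (continuous_algebraMap ℝ ℂ)) A).symm

theorem continuous_exp_smul (A : Matrix n n ℝ) : Continuous fun t : ℝ => exp (t • A) :=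
  exp_continuous.comp (continuous_id.smul continuous_const)

theorem hasDerivAt_vecMul_exp_smul (A : Matrix n n ℝ) (p : n → ℝ) (s : ℝ) :
    HasDerivAt (fun s : ℝ => p ᵥ* exp (s • A)) ((p ᵥ* exp (s • A)) ᵥ* A) s := by
  have hL := (LinearMap.toContinuousLinearMap (vecMulBilin ℝ ℝ p)).hasFDerivAt (x := exp (s • A))
  exact (hL.comp_hasDerivAt s (hasDerivAt_exp_smul_const A s)).congr_deriv
    (vecMul_vecMul _ _ _).symm

end LinftyOpNorm

theorem isBigO_exp_smul_mulVec_of_mem_maxGenEigenspace {M : Matrix n n ℂ} {μ : ℂ} {ε : ℝ}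
    (hμ : μ.re < -ε) {v : n → ℂ} (hv : v ∈ Module.End.maxGenEigenspace (toLin' M) μ) :
    (fun t : ℝ => exp (t • M) *ᵥ v) =O[atTop] fun t => Real.exp (-ε * t) := by
  obtain ⟨K, hK⟩ := (Module.End.mem_maxGenEigenspace _ _ _).1 hv
  set N := M - μ • 1
  have hNK : N ^ K *ᵥ v = 0 := by
    rw [← toLin'_apply]
    change toLinAlgEquiv' (N ^ K) v = 0
    rwa [map_pow, map_sub, map_smul, map_one]
  have hexpand : ∀ t : ℝ, exp (t • M) *ᵥ v =
      ∑ k ∈ range K, (Complex.exp (t * μ) * (t : ℂ) ^ k) • ((k !⁻¹ : ℂ) • (N ^ k *ᵥ v)) := by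
    intro t
    rw [exp_smul_eq_cexp_smul_exp_smul_sub M μ t, smul_mulVec,
      exp_mulVec_eq_sum_of_pow_mulVec_eq_zero (K := K), smul_sum]
    · refine sum_congr rfl fun k _ => ?_
      rw [smul_pow, smul_mulVec, mul_smul, smul_comm (k !⁻¹ : ℂ), ← Complex.coe_smul,
        Complex.ofReal_pow]
    · rw [smul_pow, smul_mulVec, hNK, smul_zero]
  refine (IsBigO.fun_sum fun k _ => ?_).congr (fun t => (hexpand t).symm) fun _ => rfl
  exact (isBigO_of_le' _ (c := ‖(k !⁻¹ : ℂ) • (N ^ k *ᵥ v)‖) fun t => (norm_smul _ _).trans_le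
    (mul_comm _ _).le).trans (isBigO_cexp_mul_mul_pow hμ k)

theorem exists_isBigO_exp_smul_mulVec {M : Matrix n n ℂ} (hM : ∀ z ∈ spectrum ℂ M, z.re < 0) :
    ∃ ε > 0, ∀ v : n → ℂ,
      (fun t : ℝ => exp (t • M) *ᵥ v) =O[atTop] fun t => Real.exp (-ε * t) := by
  obtain ⟨ε, hε, hgap⟩ := M.finite_spectrum.isCompact.exists_pos_forall_re_lt_neg hM
  refine ⟨ε, hε, fun v => ?_⟩
  have hv : v ∈ ⨆ μ, Module.End.maxGenEigenspace (toLin' M) μ := by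
    rw [Module.End.iSup_maxGenEigenspace_eq_top]; trivial
  refine Submodule.iSup_induction (motive := fun v =>
    (fun t : ℝ => exp (t • M) *ᵥ v) =O[atTop] fun t => Real.exp (-ε * t)) _ hv
    (fun μ w hw => ?_) (by simp only [mulVec_zero]; exact isBigO_zero _ _)
    fun x y hx hy => by simpa [mulVec_add] using hx.add hy
  rcases eq_or_ne w 0 with rfl | hw0
  · simp only [mulVec_zero]; exact isBigO_zero _ _
  refine isBigO_exp_smul_mulVec_of_mem_maxGenEigenspace (hgap μ ?_) hw
  have hμ : Module.End.HasUnifEigenvalue (toLin' M) μ ⊤ :=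
    (Submodule.ne_bot_iff _).2 ⟨w, hw, hw0⟩
  rw [← spectrum_toLin']
  exact Module.End.hasEigenvalue_iff_mem_spectrum.1 (hμ.lt zero_lt_one)

theorem exists_isBigO_exp_smul_apply {A : Matrix n n ℝ}
    (hA : ∀ z ∈ spectrum ℂ (A.map (algebraMap ℝ ℂ)), z.re < 0) :
    ∃ ε > 0, ∀ i j, (fun t : ℝ => exp (t • A) i j) =O[atTop] fun t => Real.exp (-ε * t) := by
  obtain ⟨ε, hε, hdecay⟩ := exists_isBigO_exp_smul_mulVec hA
  refine ⟨ε, hε, fun i j => IsBigO.of_norm_left ?_⟩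
  refine (isBigO_pi.1 (hdecay (Pi.single j 1)) i).norm_left.congr (fun t => ?_) fun _ => rfl
  have hmap : t • A.map (algebraMap ℝ ℂ) = (t • A).map (algebraMap ℝ ℂ) := by
    ext; simp
  rw [hmap, exp_map_algebraMap, mulVec_single_one]
  simp

theorem tendsto_vecMul_exp_smul_atTop {A : Matrix n n ℝ} {ε : ℝ} (hε : 0 < ε)
    (hdecay : ∀ i j, (fun t : ℝ => exp (t • A) i j) =O[atTop] fun t => Real.exp (-ε * t))
    (p : n → ℝ) : Tendsto (fun s : ℝ => p ᵥ* exp (s • A)) atTop (𝓝 0) := by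
  have hexp : Tendsto (fun t : ℝ => Real.exp (-ε * t)) atTop (𝓝 0) :=
    Real.tendsto_exp_atBot.comp (tendsto_id.const_mul_atTop_of_neg (neg_neg_iff_pos.2 hε))
  have hE : Tendsto (fun s : ℝ => exp (s • A)) atTop (𝓝 0) :=
    tendsto_pi_nhds.2 fun i => tendsto_pi_nhds.2 fun j => (hdecay i j).trans_tendsto hexp
  have h := ((continuous_const.matrix_vecMul continuous_id :
    Continuous fun M : Matrix n n ℝ => p ᵥ* M).tendsto 0).comp hE
  rwa [vecMul_zero] at h

theorem hasDerivAt_comp_vecMul_exp_smul {H : (n → ℝ) → ℝ} (hH : Differentiable ℝ H)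
    {A : Matrix n n ℝ} {b : n → ℝ}
    (hpde : ∀ p : n → ℝ, -(∑ ℓ, b ℓ * (p ℓ) ^ 2) * H p
      + ∑ ℓ, p ℓ * ∑ j, A ℓ j * fderiv ℝ H p (Pi.single j 1) = 0)
    (p : n → ℝ) (s : ℝ) :
    HasDerivAt (fun s : ℝ => H (p ᵥ* exp (s • A)))
      ((∑ ℓ, b ℓ * (p ᵥ* exp (s • A)) ℓ ^ 2) * H (p ᵥ* exp (s • A))) s := by
  refine ((hH _).hasFDerivAt.comp_hasDerivAt s (hasDerivAt_vecMul_exp_smul A p s)).congr_deriv ?_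
  rw [map_vecMul_eq_sum]
  linarith [hpde (p ᵥ* exp (s • A))]

end Matrix

theorem pde_solution_unique_general (d : ℕ) (A : Matrix (Fin d) (Fin d) ℝ)
    (b : Fin d → ℝ)
    (hA : ∀ z ∈ spectrum ℂ (A.map (algebraMap ℝ ℂ)), z.re < 0)
    (S : Matrix (Fin d) (Fin d) ℝ)
    (hS : S = Matrix.of fun i j => ∫ τ in Set.Ioi (0 : ℝ),
      (NormedSpace.exp (τ • A) * Matrix.diagonal b *
        (NormedSpace.exp (τ • A))ᵀ) i j)
    (H : (Fin d → ℝ) → ℝ)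
    (hreg : ContDiff ℝ 1 H) (h0 : H 0 = 1)
    (hpde : ∀ p : Fin d → ℝ,
      -(∑ ℓ, b ℓ * (p ℓ) ^ 2) * H p
        + ∑ ℓ, p ℓ * ∑ j, A ℓ j * fderiv ℝ H p (Pi.single j 1) = 0) :
    ∀ p : Fin d → ℝ, H p = Real.exp (-(p ⬝ᵥ S.mulVec p)) := by
  intro p
  obtain ⟨ε, hε, hdecay⟩ := exists_isBigO_exp_smul_apply hA
  set K := fun τ : ℝ => exp (τ • A) * diagonal b * (exp (τ • A))ᵀ
  have hK : ∀ i j, IntegrableOn (fun τ => K τ i j) (Ioi 0) :=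
    integrableOn_mul_diagonal_mul_transpose_apply hε (continuous_exp_smul A) hdecay b
  have hKcont : Continuous fun τ => p ⬝ᵥ K τ *ᵥ p :=
    continuous_const.dotProduct ((((continuous_exp_smul A).matrix_mul continuous_const).matrix_mul
      (continuous_exp_smul A).matrix_transpose).matrix_mulVec continuous_const)
  have hchar : ∀ s, HasDerivAt (fun s : ℝ => H (p ᵥ* exp (s • A)))
      ((p ⬝ᵥ K s *ᵥ p) * H (p ᵥ* exp (s • A))) s := fun s => by
    rw [dotProduct_mul_diagonal_mul_transpose_mulVec]
    exact hasDerivAt_comp_vecMul_exp_smul (hreg.differentiable one_ne_zero) hpde p s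
  have hlim : Tendsto (fun s : ℝ => H (p ᵥ* exp (s • A))) atTop (𝓝 1) := by
    have h := (hreg.continuous.tendsto 0).comp (tendsto_vecMul_exp_smul_atTop hε hdecay p)
    rwa [h0] at h
  have hH := eq_exp_neg_integral_Ioi_of_hasDerivAt hKcont (integrable_dotProduct_mulVec hK p p)
    hchar hlim
  rw [hS, ← integral_dotProduct_mulVec hK, ← hH]
  simp

/-- Let `A` be a real `d×d` matrix with all eigenvalues of strictly negative real part
and `b₁,…,b_d > 0`.  If `H : ℝ^d → ℝ` is a `C¹` function with `H(0) = 1` satisfying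
`−∑_ℓ b_ℓ p_ℓ² H(p) + ∑_ℓ p_ℓ ∑_j A_{ℓ,j} ∂_{p_j} H(p) = 0` for all `p`, then
`H(p) = exp(−⟨p, S p⟩)` where `S = ∫₀^∞ e^{τA} diag(b) e^{τAᵀ} dτ`; in particular
the solution is unique. -/
theorem pde_solution_unique (d : ℕ) (A : Matrix (Fin d) (Fin d) ℝ)
    (b : Fin d → ℝ) (hb : ∀ i, 0 < b i)
    (hA : ∀ z ∈ spectrum ℂ (A.map (algebraMap ℝ ℂ)), z.re < 0)
    (S : Matrix (Fin d) (Fin d) ℝ)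
    (hS : S = Matrix.of fun i j => ∫ τ in Set.Ioi (0 : ℝ),
      (NormedSpace.exp (τ • A) * Matrix.diagonal b *
        (NormedSpace.exp (τ • A))ᵀ) i j)
    (H : (Fin d → ℝ) → ℝ)
    (hreg : ContDiff ℝ 1 H) (h0 : H 0 = 1)
    (hpde : ∀ p : Fin d → ℝ,
      -(∑ ℓ, b ℓ * (p ℓ) ^ 2) * H p
        + ∑ ℓ, p ℓ * ∑ j, A ℓ j * fderiv ℝ H p (Pi.single j 1) = 0) :
    ∀ p : Fin d → ℝ, H p = Real.exp (-(p ⬝ᵥ S.mulVec p)) :=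
  pde_solution_unique_general d A b hA S hS H hreg h0 hpde
end

section
/- For every integer q ≥ 1, vectors n, n* ∈ ℝ^d, standard basis vector e_j, and sign ε ∈ {+1, −1}: |‖n − n* + ε e_j‖₂^{2q} − ‖n − n*‖₂^{2q} − 2qε(n_j − n*_j)‖n − n*‖₂^{2q−2}| ≤ 3^q · 2^q · (1 + ‖n − n*‖₂^{2q−2}). -/
/-!
With `m = n - n*`, `r = ‖m‖` and `s = 2ε m_j + 1` we have `‖m + ε e_j‖² = r² + s` and
`|s| ≤ 2r + 1`, so the quantity to bound is the binomial tail `(r² + s)^q - r^{2q} - q s r^{2q-2}`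
plus `q r^{2q-2}`. The recursion `T_{n+1}(s) = (x + s) T_n(s) + (n + 1) s² xⁿ` for these tails
shows that they only grow when `s` is replaced by `u ≥ |s|`; for `u = 2r + 1` the result is the
tail of `(r + 1)^{2q}` at `r`, namely `∑_{k ≤ 2q-2} C(2q, k) r^k ≤ 4^q (1 + r^{2q-2})`.
-/

open Finset

def binomTail (x s : ℝ) (n : ℕ) : ℝ :=
  (x + s) ^ (n + 1) - x ^ (n + 1) - (n + 1) * s * x ^ n

lemma binomTail_succ (x s : ℝ) (n : ℕ) :
    binomTail x s (n + 1) = (x + s) * binomTail x s n + (n + 1) * s ^ 2 * x ^ n := by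
  simp only [binomTail]
  push_cast
  ring

lemma abs_binomTail_le {x s u : ℝ} (hx : 0 ≤ x) (hs : |s| ≤ u) (n : ℕ) :
    |binomTail x s n| ≤ binomTail x u n := by
  induction n with
  | zero => simp [binomTail]
  | succ n ih =>
    have hxs : |x + s| ≤ x + u := (abs_add_le x s).trans (by rw [abs_of_nonneg hx]; linarith)
    have hsq : s ^ 2 ≤ u ^ 2 := sq_le_sq' (abs_le.mp hs).1 (abs_le.mp hs).2
    rw [binomTail_succ, binomTail_succ]
    calc |(x + s) * binomTail x s n + (n + 1) * s ^ 2 * x ^ n|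
        ≤ |x + s| * |binomTail x s n| + (n + 1) * s ^ 2 * x ^ n := by
          rw [← abs_mul]
          refine (abs_add_le _ _).trans_eq ?_
          rw [abs_of_nonneg (mul_nonneg (by positivity) (pow_nonneg hx n))]
      _ ≤ (x + u) * binomTail x u n + (n + 1) * u ^ 2 * x ^ n :=
          add_le_add (mul_le_mul hxs ih (abs_nonneg _) ((abs_nonneg _).trans hxs))
            (mul_le_mul_of_nonneg_right (by gcongr) (pow_nonneg hx n))

lemma pow_le_one_add_pow {r : ℝ} (hr : 0 ≤ r) {m M : ℕ} (h : m ≤ M) : r ^ m ≤ 1 + r ^ M := by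
  rcases le_total r 1 with h1 | h1
  · linarith [pow_le_one₀ hr h1 (n := m), pow_nonneg hr M]
  · linarith [pow_le_pow_right₀ h1 h]

lemma binomTail_one_eq_sum (r : ℝ) (n : ℕ) :
    binomTail r 1 (n + 1) = ∑ k ∈ range (n + 1), ((n + 2).choose k : ℝ) * r ^ k := by
  have h := add_pow r 1 (n + 2)
  simp only [one_pow, mul_one, sum_range_succ _ (n + 1), sum_range_succ _ (n + 2),
    Nat.choose_self, Nat.choose_succ_self_right] at h
  rw [binomTail, h, sum_congr rfl fun k _ => mul_comm _ _]
  push_cast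
  ring

lemma binomTail_one_le {r : ℝ} (hr : 0 ≤ r) (n : ℕ) :
    binomTail r 1 (n + 1) ≤ 2 ^ (n + 2) * (1 + r ^ n) := by
  have hchoose : ∑ k ∈ range (n + 1), ((n + 2).choose k : ℝ) ≤ 2 ^ (n + 2) := by
    calc ∑ k ∈ range (n + 1), ((n + 2).choose k : ℝ)
        ≤ ∑ k ∈ range (n + 2 + 1), ((n + 2).choose k : ℝ) :=
          sum_le_sum_of_subset_of_nonneg (range_subset_range.mpr (by omega)) (by intros; positivity)
      _ = 2 ^ (n + 2) := by exact_mod_cast Nat.sum_range_choose (n + 2)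
  rw [binomTail_one_eq_sum]
  calc ∑ k ∈ range (n + 1), ((n + 2).choose k : ℝ) * r ^ k
      ≤ ∑ k ∈ range (n + 1), ((n + 2).choose k : ℝ) * (1 + r ^ n) := by
        gcongr with k hk
        exact pow_le_one_add_pow hr (Nat.lt_succ_iff.mp (mem_range.mp hk))
    _ = (∑ k ∈ range (n + 1), ((n + 2).choose k : ℝ)) * (1 + r ^ n) := (sum_mul ..).symm
    _ ≤ 2 ^ (n + 2) * (1 + r ^ n) := by gcongr

lemma binomTail_sq_add_eq (r : ℝ) (p : ℕ) :
    binomTail (r ^ 2) (2 * r + 1) p + (p + 1) * r ^ (2 * p) = binomTail r 1 (2 * p + 1) := by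
  simp only [binomTail]
  rw [show r ^ 2 + (2 * r + 1) = (r + 1) ^ 2 by ring]
  simp only [← pow_mul]
  push_cast
  ring

lemma EuclideanSpace.norm_add_smul_single_sq {ι : Type*} [Fintype ι] [DecidableEq ι]
    (x : EuclideanSpace ℝ ι) (j : ι) (a : ℝ) :
    ‖x + a • EuclideanSpace.single j (1 : ℝ)‖ ^ 2 = ‖x‖ ^ 2 + 2 * a * x j + a ^ 2 := by
  rw [norm_add_sq_real, inner_smul_right, EuclideanSpace.inner_single_right, norm_smul,
    PiLp.norm_single]
  simp only [conj_trivial, one_mul, norm_one, mul_one, Real.norm_eq_abs, sq_abs]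
  ring

lemma EuclideanSpace.abs_two_mul_apply_add_one_le {ι : Type*} [Fintype ι]
    (x : EuclideanSpace ℝ ι) (j : ι) {a : ℝ} (ha : |a| ≤ 1) :
    |2 * a * x j + 1| ≤ 2 * ‖x‖ + 1 := by
  have hxj : |a * x j| ≤ ‖x‖ := by
    rw [abs_mul]
    exact (mul_le_mul ha (PiLp.norm_apply_le x j) (abs_nonneg _) zero_le_one).trans_eq (one_mul _)
  calc |2 * a * x j + 1| ≤ |2 * (a * x j)| + |1| := by rw [← mul_assoc]; exact abs_add_le _ _
    _ ≤ 2 * ‖x‖ + 1 := by rw [abs_mul, abs_two, abs_one]; linarith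

/-- For every integer `q ≥ 1`, vectors `n, n* ∈ ℝ^d`, standard basis vector `e_j`
and sign `ε ∈ {+1, −1}`:
`|‖n − n* + ε e_j‖₂^{2q} − ‖n − n*‖₂^{2q} − 2qε(n_j − n*_j)‖n − n*‖₂^{2q−2}|
  ≤ 3^q · 2^q · (1 + ‖n − n*‖₂^{2q−2})`. -/
theorem norm_pow_add_sign_single_estimate (d : ℕ) (q : ℕ) (hq : 1 ≤ q)
    (n nstar : EuclideanSpace ℝ (Fin d)) (j : Fin d) (ε : ℝ) (hε : ε = 1 ∨ ε = -1) :
    |‖n - nstar + ε • EuclideanSpace.single j (1 : ℝ)‖ ^ (2 * q)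
        - ‖n - nstar‖ ^ (2 * q)
        - 2 * (q : ℝ) * ε * (n j - nstar j) * ‖n - nstar‖ ^ (2 * q - 2)|
      ≤ 3 ^ q * 2 ^ q * (1 + ‖n - nstar‖ ^ (2 * q - 2)) := by
  obtain ⟨p, rfl⟩ : ∃ p, q = p + 1 := ⟨q - 1, by omega⟩
  set m := n - nstar
  set r := ‖m‖
  set s := 2 * ε * m j + 1
  have hεabs : |ε| = 1 := by rcases hε with rfl | rfl <;> norm_num
  have hε2 : ε ^ 2 = 1 := by rw [← sq_abs, hεabs, one_pow]
  have hs : |s| ≤ 2 * r + 1 := EuclideanSpace.abs_two_mul_apply_add_one_le m j hεabs.le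
  have hexpand : ‖m + ε • EuclideanSpace.single j (1 : ℝ)‖ ^ (2 * (p + 1)) - r ^ (2 * (p + 1))
      - 2 * ((p + 1 : ℕ) : ℝ) * ε * m j * r ^ (2 * (p + 1) - 2)
      = binomTail (r ^ 2) s p + (p + 1) * r ^ (2 * p) := by
    rw [pow_mul, EuclideanSpace.norm_add_smul_single_sq, hε2, show 2 * (p + 1) - 2 = 2 * p by omega]
    simp only [binomTail, s]
    push_cast
    ring
  calc |_| = |binomTail (r ^ 2) s p + (p + 1) * r ^ (2 * p)| := by rw [← hexpand]; rfl
    _ ≤ |binomTail (r ^ 2) s p| + |(p + 1) * r ^ (2 * p)| := abs_add_le _ _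
    _ ≤ binomTail (r ^ 2) (2 * r + 1) p + (p + 1) * r ^ (2 * p) := by
        rw [abs_of_nonneg (by positivity : (0 : ℝ) ≤ (p + 1) * r ^ (2 * p))]
        gcongr
        exact abs_binomTail_le (sq_nonneg r) hs p
    _ = binomTail r 1 (2 * p + 1) := binomTail_sq_add_eq r p
    _ ≤ 2 ^ (2 * p + 2) * (1 + r ^ (2 * p)) := binomTail_one_le (norm_nonneg m) (2 * p)
    _ ≤ 3 ^ (p + 1) * 2 ^ (p + 1) * (1 + r ^ (2 * (p + 1) - 2)) := by
        rw [show 2 * (p + 1) - 2 = 2 * p by omega, show 2 * p + 2 = (p + 1) + (p + 1) by ring,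
          pow_add]
        gcongr
        norm_num
end

section
/- Let X : ℝ_{≥0}^d → ℝ^d be a vector field, x* a point in the interior of ℝ_{≥0}^d with X(x*) = 0, and suppose there exist β > 0 and R > ‖x*‖₂ such that ⟨X(x), x − x*⟩ ≤ −β ‖x‖₂ ‖x − x*‖₂² for all x ∈ ℝ_{≥0}^d with ‖x‖₂ < R. If X is differentiable at x* with Jacobian M* = DX(x*), then the symmetric matrix M* + (M*)ᵀ is negative semidefinite; in particular every eigenvalue of M* has nonpositive real part. -/
/-!
Testing the inequality along the ray `x* + t v`, `t ↓ 0`, and using `X x* = 0`: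
`⟨X(x* + t v), t v⟩ ≤ 0`, so the slope `⟨t⁻¹ X(x* + t v), v⟩` is nonpositive and tends to
`⟨M v, v⟩`. Hence the quadratic form of `M` is nonpositive, and so is that of `M + Mᵀ`. For an
eigenpair `M w = z w` over `ℂ`, the real part of `w* M w = z ‖w‖²` is the sum of the quadratic
forms of `M` at `Re w` and `Im w`, which gives `Re z ≤ 0`.
-/

open Matrix Filter WithLp
open scoped RealInnerProductSpace Topology ComplexOrder

theorem re_star_dotProduct_map_ofReal_mulVec {n : Type*} [Fintype n] (M : Matrix n n ℝ)
    (v : n → ℂ) :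
    (star v ⬝ᵥ M.map (↑) *ᵥ v).re =
      (fun i ↦ (v i).re) ⬝ᵥ M *ᵥ (fun i ↦ (v i).re) +
        (fun i ↦ (v i).im) ⬝ᵥ M *ᵥ (fun i ↦ (v i).im) := by
  simp only [dotProduct, mulVec, Complex.re_sum, Pi.star_apply, Complex.star_def, Finset.mul_sum,
    ← Finset.sum_add_distrib, Complex.mul_re, Complex.mul_im, Complex.conj_re, Complex.conj_im,
    Complex.re_sum, map_apply, Complex.ofReal_re, Complex.ofReal_im]
  refine Finset.sum_congr rfl fun i _ ↦ Finset.sum_congr rfl fun j _ ↦ ?_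
  ring

theorem re_nonpos_of_mem_spectrum_of_dotProduct_mulVec_nonpos {n : Type*} [Fintype n]
    [DecidableEq n] {M : Matrix n n ℝ} (hM : ∀ v, v ⬝ᵥ M *ᵥ v ≤ 0) {z : ℂ}
    (hz : z ∈ spectrum ℂ (M.map (algebraMap ℝ ℂ))) : z.re ≤ 0 := by
  rw [← spectrum_toLin', ← Module.End.hasEigenvalue_iff_mem_spectrum] at hz
  obtain ⟨v, hv⟩ := hz.exists_hasEigenvector
  obtain ⟨hpos, hreal⟩ := Complex.pos_iff.1 (dotProduct_star_self_pos_iff.2 hv.2)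
  have hquad : star v ⬝ᵥ M.map (↑) *ᵥ v = z * (star v ⬝ᵥ v) :=
    calc star v ⬝ᵥ M.map (↑) *ᵥ v = star v ⬝ᵥ z • v := by rw [← hv.apply_eq_smul]; rfl
      _ = z * (star v ⬝ᵥ v) := dotProduct_smul ..
  have hre := re_star_dotProduct_map_ofReal_mulVec M v
  rw [hquad, Complex.mul_re, ← hreal, mul_zero, sub_zero] at hre
  exact nonpos_of_mul_nonpos_left (hre ▸ add_nonpos (hM _) (hM _)) hpos

theorem HasFDerivAt.inner_apply_nonpos_of_eventually {E F : Type*} [NormedAddCommGroup E]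
    [NormedSpace ℝ E] [NormedAddCommGroup F] [InnerProductSpace ℝ F] {f : E → F}
    {f' : E →L[ℝ] F} {x v : E} {w : F} (hf : HasFDerivAt f f' x) (hfx : f x = 0)
    (h : ∀ᶠ t in 𝓝[>] (0 : ℝ), ⟪f (x + t • v), w⟫ ≤ 0) : ⟪f' v, w⟫ ≤ 0 := by
  have hslope := (hasDerivAt_iff_tendsto_slope.1 (hf.hasLineDerivAt v)).mono_left
    (nhdsGT_le_nhdsNE 0)
  refine le_of_tendsto (hslope.inner tendsto_const_nhds) ?_
  filter_upwards [h, self_mem_nhdsWithin] with t ht (htpos : 0 < t)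
  rw [slope_def_module, zero_smul, add_zero, hfx, sub_zero, sub_zero, real_inner_smul_left]
  exact mul_nonpos_of_nonneg_of_nonpos (inv_nonneg.2 htpos.le) ht

theorem EuclideanSpace.eventually_nhds_nonneg_and_norm_lt {ι : Type*} [Fintype ι]
    {x : EuclideanSpace ℝ ι} {R : ℝ} (hx : ∀ i, 0 < x i) (hR : ‖x‖ < R) :
    ∀ᶠ y in 𝓝 x, (∀ i, 0 ≤ y i) ∧ ‖y‖ < R :=
  (eventually_all.2 fun i ↦ ((PiLp.continuous_apply 2 _ i).continuousAt.eventually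
    (lt_mem_nhds (hx i))).mono fun _ ↦ le_of_lt).and
    (continuous_norm.continuousAt.eventually (gt_mem_nhds hR))

/-- Let `X` be a vector field on `ℝ_{≥0}^d`, `x*` an interior fixed point (`X x* = 0`,
all coordinates positive) such that for some `β > 0` and `R > ‖x*‖`, every `x` in the
nonnegative orthant with `‖x‖ < R` satisfies `⟨X(x), x − x*⟩ ≤ −β‖x‖‖x − x*‖²`.
If `X` is differentiable at `x*` with Jacobian `M`, then `M + Mᵀ` is negative
semidefinite; in particular every eigenvalue of `M` has nonpositive real part. -/
theorem jacobian_neg_semidef_of_attracting (d : ℕ)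
    (X : EuclideanSpace ℝ (Fin d) → EuclideanSpace ℝ (Fin d))
    (xstar : EuclideanSpace ℝ (Fin d)) (β R : ℝ)
    (M : Matrix (Fin d) (Fin d) ℝ)
    (hxstar : ∀ i, 0 < xstar i) (hX0 : X xstar = 0)
    (hβ : 0 < β) (hR : ‖xstar‖ < R)
    (hineq : ∀ x : EuclideanSpace ℝ (Fin d), (∀ i, 0 ≤ x i) → ‖x‖ < R →
      ⟪X x, x - xstar⟫ ≤ -β * ‖x‖ * ‖x - xstar‖ ^ 2)
    (hdiff : HasFDerivAt X
      (LinearMap.toContinuousLinearMap (Matrix.toEuclideanLin M)) xstar) :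
    (∀ v : Fin d → ℝ, v ⬝ᵥ (M + Mᵀ).mulVec v ≤ 0) ∧
    (∀ z ∈ spectrum ℂ (M.map (algebraMap ℝ ℂ)), z.re ≤ 0) := by
  have hquad (v : Fin d → ℝ) : v ⬝ᵥ M *ᵥ v ≤ 0 := by
    change ⟪toEuclideanLin M (toLp 2 v), toLp 2 v⟫ ≤ 0
    refine hdiff.inner_apply_nonpos_of_eventually hX0 ?_
    have hray : Tendsto (fun t : ℝ ↦ xstar + t • toLp 2 v) (𝓝[>] 0) (𝓝 xstar) :=
      ((continuous_const.add (continuous_id.smul continuous_const)).tendsto' 0 xstar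
        (by simp)).mono_left nhdsWithin_le_nhds
    filter_upwards [hray.eventually (EuclideanSpace.eventually_nhds_nonneg_and_norm_lt hxstar hR),
      self_mem_nhdsWithin] with t ⟨hnonneg, hnorm⟩ (ht : 0 < t)
    have h := hineq _ hnonneg hnorm
    rw [add_sub_cancel_left, real_inner_smul_right] at h
    have : 0 ≤ β * ‖xstar + t • toLp 2 v‖ * ‖t • toLp 2 v‖ ^ 2 := by positivity
    exact nonpos_of_mul_nonpos_right (by linarith) ht
  refine ⟨fun v ↦ ?_, fun z hz ↦ re_nonpos_of_mem_spectrum_of_dotProduct_mulVec_nonpos hquad hz⟩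
  rw [add_mulVec, dotProduct_add, dotProduct_transpose_mulVec]
  linarith [hquad v]
end

section
/- Let ν be a probability measure on ℤ_{≥0}^d, D ⊂ ℤ_{≥0}^d a set, and suppose: (i) ∫ e^{‖n‖₁} dν(n) ≤ 2e^{cK} for some constants c > 0 and K ≥ 1, and (ii) ν(D^c) ≤ e^{−bK} for some b > 0. Then for every integer q ≥ 0, ∫_{D^c} ‖n‖₁^q dν(n) ≤ q^q e^{−q} K^q · (2 e^{cK})^{1/K} · e^{−bK(1 − 1/K)}. -/
open MeasureTheory

/-!
Pointwise, `x ^ q ≤ q ^ q e^{-q} K ^ q e^{x / K}` for `x ≥ 0`, since `y e^{-y} ≤ e^{-1}` at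
`y = x / (qK)`. Integrating `e^{‖n‖₁ / K}` over `Dᶜ` and applying Hölder's inequality with exponents
`K` and `K / (K - 1)` against the indicator of `Dᶜ` gives
`(∫ e^{‖n‖₁} dν) ^ (1 / K) · ν(Dᶜ) ^ (1 - 1 / K)`.
-/

lemma Real.pow_mul_exp_neg_le {t : ℝ} (ht : 0 ≤ t) (q : ℕ) :
    t ^ q * Real.exp (-t) ≤ (q : ℝ) ^ q * Real.exp (-(q : ℝ)) := by
  rcases Nat.eq_zero_or_pos q with rfl | hq
  · simpa using Real.exp_le_one_iff.mpr (neg_nonpos.mpr ht)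
  have hq0 : (q : ℝ) ≠ 0 := by positivity
  calc t ^ q * Real.exp (-t) = (q * (t / q * Real.exp (-(t / q)))) ^ q := by
        rw [mul_pow, mul_pow, ← Real.exp_nat_mul, mul_neg, mul_div_cancel₀ _ hq0, div_pow]
        field_simp
    _ ≤ (q * Real.exp (-1)) ^ q := by
        gcongr
        exact Real.mul_exp_neg_le_exp_neg_one _
    _ = (q : ℝ) ^ q * Real.exp (-(q : ℝ)) := by
        rw [mul_pow, ← Real.exp_nat_mul, mul_neg_one]

lemma Real.pow_le_mul_exp_div {x K : ℝ} (hx : 0 ≤ x) (hK : 0 < K) (q : ℕ) :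
    x ^ q ≤ (q : ℝ) ^ q * Real.exp (-(q : ℝ)) * K ^ q * Real.exp (x / K) := by
  calc x ^ q = K ^ q * ((x / K) ^ q * Real.exp (-(x / K))) * Real.exp (x / K) := by
        rw [Real.exp_neg, div_pow]; field_simp
    _ ≤ K ^ q * ((q : ℝ) ^ q * Real.exp (-(q : ℝ))) * Real.exp (x / K) := by
        gcongr K ^ q * ?_ * _; exact Real.pow_mul_exp_neg_le (div_nonneg hx hK.le) q
    _ = (q : ℝ) ^ q * Real.exp (-(q : ℝ)) * K ^ q * Real.exp (x / K) := by ring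

section

variable {α : Type*} [MeasurableSpace α] {μ : Measure α}

lemma setLIntegral_le_lintegral_rpow_mul_measure_rpow {f : α → ENNReal} (hf : AEMeasurable f μ)
    {p : ℝ} (hp : 1 ≤ p) (s : Set α) :
    ∫⁻ x in s, f x ∂μ ≤ (∫⁻ x, f x ^ p ∂μ) ^ (1 / p) * μ s ^ (1 - 1 / p) := by
  have hp0 : 0 < p := zero_lt_one.trans_le hp
  calc ∫⁻ x in s, f x ∂μ = eLpNorm f 1 (μ.restrict s) := by
        rw [eLpNorm_one_eq_lintegral_enorm]; rfl
    _ ≤ eLpNorm f (ENNReal.ofReal p) (μ.restrict s) *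
          μ.restrict s Set.univ ^ (1 / (1 : ENNReal).toReal - 1 / (ENNReal.ofReal p).toReal) :=
        eLpNorm_le_eLpNorm_mul_rpow_measure_univ (by simpa using hp)
          hf.restrict.aestronglyMeasurable
    _ ≤ eLpNorm f (ENNReal.ofReal p) μ * μ s ^ (1 - 1 / p) := by
        rw [Measure.restrict_apply_univ, ENNReal.toReal_ofReal hp0.le, ENNReal.toReal_one, div_one]
        gcongr
        exact Measure.restrict_le_self
    _ = (∫⁻ x, f x ^ p ∂μ) ^ (1 / p) * μ s ^ (1 - 1 / p) := by
        rw [eLpNorm_eq_lintegral_rpow_enorm_toReal (by simpa using hp0) ENNReal.ofReal_ne_top,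
          ENNReal.toReal_ofReal hp0.le]
        rfl

lemma setLIntegral_ofReal_pow_le {S : α → ℝ} (hS : AEMeasurable S μ) (hS0 : ∀ x, 0 ≤ S x)
    {K : ℝ} (hK : 1 ≤ K) (q : ℕ) (s : Set α) :
    ∫⁻ x in s, ENNReal.ofReal (S x ^ q) ∂μ
      ≤ ENNReal.ofReal ((q : ℝ) ^ q * Real.exp (-(q : ℝ)) * K ^ q) *
        ((∫⁻ x, ENNReal.ofReal (Real.exp (S x)) ∂μ) ^ (1 / K) * μ s ^ (1 - 1 / K)) := by
  have hK0 : 0 < K := zero_lt_one.trans_le hK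
  have hpow : ∀ x, ENNReal.ofReal (Real.exp (S x / K)) ^ K = ENNReal.ofReal (Real.exp (S x)) := by
    intro x
    rw [ENNReal.ofReal_rpow_of_pos (Real.exp_pos _), ← Real.exp_mul, div_mul_cancel₀ _ hK0.ne']
  have hholder := setLIntegral_le_lintegral_rpow_mul_measure_rpow
    (f := fun x => ENNReal.ofReal (Real.exp (S x / K))) (by fun_prop) hK s
  simp only [hpow] at hholder
  calc ∫⁻ x in s, ENNReal.ofReal (S x ^ q) ∂μ
      ≤ ∫⁻ x in s, ENNReal.ofReal ((q : ℝ) ^ q * Real.exp (-(q : ℝ)) * K ^ q) *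
          ENNReal.ofReal (Real.exp (S x / K)) ∂μ := by
        refine lintegral_mono fun x => ?_
        rw [← ENNReal.ofReal_mul (by positivity)]
        exact ENNReal.ofReal_le_ofReal (Real.pow_le_mul_exp_div (hS0 x) hK0 q)
    _ = ENNReal.ofReal ((q : ℝ) ^ q * Real.exp (-(q : ℝ)) * K ^ q) *
          ∫⁻ x in s, ENNReal.ofReal (Real.exp (S x / K)) ∂μ :=
        lintegral_const_mul' _ _ ENNReal.ofReal_ne_top
    _ ≤ _ := by gcongr

end

theorem moment_bound_on_complement_general (d : ℕ) (ν : Measure (Fin d → ℕ))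
    (D : Set (Fin d → ℕ))
    (c b K : ℝ) (hK : 1 ≤ K)
    (h1 : ∫⁻ n, ENNReal.ofReal (Real.exp (∑ i, (n i : ℝ))) ∂ν
        ≤ ENNReal.ofReal (2 * Real.exp (c * K)))
    (h2 : ν Dᶜ ≤ ENNReal.ofReal (Real.exp (-(b * K)))) :
    ∀ q : ℕ,
      ∫⁻ n in Dᶜ, ENNReal.ofReal ((∑ i, (n i : ℝ)) ^ q) ∂ν
        ≤ ENNReal.ofReal ((q : ℝ) ^ q * Real.exp (-(q : ℝ)) * K ^ q *
            (2 * Real.exp (c * K)) ^ (1 / K) * Real.exp (-(b * K) * (1 - 1 / K))) := by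
  intro q
  have hK0 : 0 < K := zero_lt_one.trans_le hK
  refine (setLIntegral_ofReal_pow_le (measurable_of_countable _).aemeasurable
    (fun n => by positivity) hK q Dᶜ).trans ?_
  have hE : ENNReal.ofReal (Real.exp (-(b * K) * (1 - 1 / K)))
      = ENNReal.ofReal (Real.exp (-(b * K))) ^ (1 - 1 / K) := by
    rw [Real.exp_mul, ENNReal.ofReal_rpow_of_pos (Real.exp_pos _)]
  conv_rhs => rw [ENNReal.ofReal_mul (by positivity), ENNReal.ofReal_mul (by positivity),
    ← ENNReal.ofReal_rpow_of_pos (x := 2 * Real.exp (c * K)) (by positivity), hE, mul_assoc]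
  gcongr
  exact sub_nonneg.mpr (div_le_one_of_le₀ hK hK0.le)

/-- Let `ν` be a probability measure on `ℤ_{≥0}^d`, `D` a set, and suppose
(i) `∫ e^{‖n‖₁} dν(n) ≤ 2e^{cK}` for constants `c > 0`, `K ≥ 1`, and
(ii) `ν(Dᶜ) ≤ e^{−bK}` for some `b > 0`.  Then for every integer `q ≥ 0`,
`∫_{Dᶜ} ‖n‖₁^q dν(n) ≤ q^q e^{−q} K^q (2e^{cK})^{1/K} e^{−bK(1 − 1/K)}`. -/
theorem moment_bound_on_complement (d : ℕ) (ν : Measure (Fin d → ℕ))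
    [IsProbabilityMeasure ν] (D : Set (Fin d → ℕ))
    (c b K : ℝ) (hc : 0 < c) (hb : 0 < b) (hK : 1 ≤ K)
    (h1 : ∫⁻ n, ENNReal.ofReal (Real.exp (∑ i, (n i : ℝ))) ∂ν
        ≤ ENNReal.ofReal (2 * Real.exp (c * K)))
    (h2 : ν Dᶜ ≤ ENNReal.ofReal (Real.exp (-(b * K)))) :
    ∀ q : ℕ,
      ∫⁻ n in Dᶜ, ENNReal.ofReal ((∑ i, (n i : ℝ)) ^ q) ∂ν
        ≤ ENNReal.ofReal ((q : ℝ) ^ q * Real.exp (-(q : ℝ)) * K ^ q *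
            (2 * Real.exp (c * K)) ^ (1 / K) * Real.exp (-(b * K) * (1 - 1 / K))) :=
  moment_bound_on_complement_general d ν D c b K hK h1 h2
end
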